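/- Let γ be a profile function of length ℓ and let m > 0. Assume the magnetic curvature is positive, i.e., m²·(−γ''(t)/γ(t)) + 1 > 0 for every t ∈ (0,ℓ). Then: (a) there is exactly one t⁺ ∈ (0,ℓ) with m·γ'(t⁺) = γ(t⁺), and the function Î⁺(t) = m·γ(t) − Γ(t) attains its maximum over [0,ℓ] exactly at t⁺; (b) there is exactly one t⁻ ∈ (0,ℓ) with −m·γ'(t⁻) = γ(t⁻), and the function Î⁻(t) = −m·γ(t) − Γ(t) attains its minimum over [0,ℓ] exactly at t⁻. -/

import Mathlib

/-- A profile function of length `ℓ`: a `C^∞` function `γ` with `γ(0) = γ(ℓ) = 0`,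
`γ > 0` on `(0,ℓ)`, `γ'(0) = 1`, `γ'(ℓ) = -1`, `|γ'| < 1` on `(0,ℓ)`, and all
even-order derivatives of `γ` vanishing at `t = 0` and `t = ℓ`. -/
structure IsProfileFunction (ℓ : ℝ) (γ : ℝ → ℝ) : Prop where
  ell_pos : 0 < ℓ
  smooth : ContDiff ℝ (⊤ : ℕ∞) γ
  zero_left : γ 0 = 0
  zero_right : γ ℓ = 0
  pos : ∀ t ∈ Set.Ioo 0 ℓ, 0 < γ t
  deriv_left : deriv γ 0 = 1
  deriv_right : deriv γ ℓ = -1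
  abs_deriv_lt_one : ∀ t ∈ Set.Ioo 0 ℓ, |deriv γ t| < 1
  even_deriv_left : ∀ n : ℕ, iteratedDeriv (2 * n) γ 0 = 0
  even_deriv_right : ∀ n : ℕ, iteratedDeriv (2 * n) γ ℓ = 0

/-- The profile function is normalized: `∫₀^ℓ γ(t) dt = 2`, so the associated surface
of revolution has area `4π`. -/
def IsNormalizedProfile (ℓ : ℝ) (γ : ℝ → ℝ) : Prop :=
  (∫ t in (0:ℝ)..ℓ, γ t) = 2

/-- `Γ(t) = -1 + ∫₀^t γ(s) ds`. -/
noncomputable def Gam (γ : ℝ → ℝ) (t : ℝ) : ℝ :=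
  -1 + ∫ s in (0:ℝ)..t, γ s

/-!
With `ε = ±1`, put `G = m γ' - ε γ`; it is the derivative of `H = m γ - ε Γ`, and
`G 0 = m > 0 > -m = G ℓ`. At a zero of `G` in `(0, ℓ)` we have `m G' = m² γ'' - ε² γ < 0`,
since `m² γ'' < γ` is exactly positivity of the magnetic curvature. A continuous function that crosses
every one of its zeros downwards has a single zero, positive before it and negative after it,
so `H` increases strictly up to that zero and decreases strictly after it.
-/

open Set Filter Topology

section DownCrossing

variable {f : ℝ → ℝ} {a b x : ℝ}

lemma eventually_neg_right_of_deriv_neg (hd : deriv f x < 0) (hx : f x = 0) :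
    ∀ᶠ t in 𝓝[>] x, f t < 0 := by
  filter_upwards [nhdsWithin_le_nhds (eventually_nhdsWithin_sign_eq_of_deriv_neg hd hx),
    self_mem_nhdsWithin] with t hsign (ht : x < t)
  rwa [sign_eq_neg_one_iff.2 (sub_neg.2 ht), sign_eq_neg_one_iff] at hsign

lemma eventually_pos_left_of_deriv_neg (hd : deriv f x < 0) (hx : f x = 0) :
    ∀ᶠ t in 𝓝[<] x, 0 < f t := by
  filter_upwards [nhdsWithin_le_nhds (eventually_nhdsWithin_sign_eq_of_deriv_neg hd hx),
    self_mem_nhdsWithin] with t hsign (ht : t < x)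
  rwa [sign_pos (sub_pos.2 ht), sign_eq_one_iff] at hsign

lemma nonpos_of_deriv_neg_at_zeros (hf : ContinuousOn f (Icc x b)) (hx : f x ≤ 0)
    (hz : ∀ t ∈ Ico x b, f t = 0 → deriv f t < 0) : Icc x b ⊆ {t | f t ≤ 0} := by
  have hclosed : IsClosed ({t | f t ≤ 0} ∩ Icc x b) := by
    rw [inter_comm]; exact hf.preimage_isClosed_of_isClosed isClosed_Icc isClosed_Iic
  -- real induction: `{f ≤ 0}` contains a right neighbourhood of each of its points in `[x, b)`
  refine hclosed.Icc_subset_of_forall_mem_nhdsWithin hx fun t ⟨(hft : f t ≤ 0), ht⟩ => ?_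
  rcases hft.lt_or_eq with hneg | hzero
  · have hcont : Tendsto f (𝓝[>] t) (𝓝 (f t)) :=
      (hf t (Ico_subset_Icc_self ht)).tendsto.mono_left
        (nhdsWithin_le_of_mem (Icc_mem_nhdsGT_of_mem ht))
    filter_upwards [hcont.eventually (eventually_lt_nhds hneg)] with s hs using hs.le
  · filter_upwards [eventually_neg_right_of_deriv_neg (hz t ht hzero) hzero] with s hs using hs.le

variable (hf : ContinuousOn f (Icc a b)) (hz : ∀ t ∈ Ioo a b, f t = 0 → deriv f t < 0)
include hf hz

lemma neg_right_of_deriv_neg_at_zeros (hb : f b < 0) (hx : x ∈ Ioo a b) (hfx : f x = 0) :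
    ∀ t ∈ Ioc x b, f t < 0 := by
  have hle := nonpos_of_deriv_neg_at_zeros (hf.mono (Icc_subset_Icc_left hx.1.le)) hfx.le
    fun t ht => hz t ⟨hx.1.trans_le ht.1, ht.2⟩
  intro t ht
  refine (hle ⟨ht.1.le, ht.2⟩).lt_of_ne fun hft => ?_
  rcases ht.2.lt_or_eq with htb | rfl
  · have hdt := hz t ⟨hx.1.trans ht.1, htb⟩ hft
    obtain ⟨s, hs, hxs, hst⟩ :=
      ((eventually_pos_left_of_deriv_neg hdt hft).and (Ioo_mem_nhdsLT ht.1)).exists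
    exact (hle ⟨hxs.le, hst.le.trans ht.2⟩).not_gt hs
  · exact hb.ne hft

lemma exists_zero_of_deriv_neg_at_zeros (hab : a ≤ b) (ha : 0 < f a) (hb : f b < 0) :
    ∃ x ∈ Ioo a b, (∀ t ∈ Ico a x, 0 < f t) ∧ f x = 0 ∧ ∀ t ∈ Ioc x b, f t < 0 := by
  obtain ⟨x, hx, hfx⟩ := intermediate_value_Icc' hab hf ⟨hb.le, ha.le⟩
  have hxo : x ∈ Ioo a b :=
    ⟨hx.1.lt_of_ne (by rintro rfl; linarith), hx.2.lt_of_ne (by rintro rfl; linarith)⟩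
  refine ⟨x, hxo, fun t ht => ?_, hfx, neg_right_of_deriv_neg_at_zeros hf hz hb hxo hfx⟩
  by_contra! hft
  obtain ⟨y, hy, hfy⟩ := intermediate_value_Icc' ht.1
    (hf.mono (Icc_subset_Icc_right (ht.2.le.trans hx.2))) ⟨hft, ha.le⟩
  have hyo : y ∈ Ioo a b :=
    ⟨hy.1.lt_of_ne (by rintro rfl; linarith), hy.2.trans_lt (ht.2.trans hxo.2)⟩
  exact (neg_right_of_deriv_neg_at_zeros hf hz hb hyo hfy x ⟨hy.2.trans_lt ht.2, hxo.2.le⟩).ne hfx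

end DownCrossing

lemma apply_lt_of_deriv_pos_of_deriv_neg {H : ℝ → ℝ} {a b x : ℝ} (hH : ContinuousOn H (Icc a b))
    (hx : x ∈ Icc a b) (hpos : ∀ t ∈ Ioo a x, 0 < deriv H t)
    (hneg : ∀ t ∈ Ioo x b, deriv H t < 0) : ∀ t ∈ Icc a b, t ≠ x → H t < H x := by
  have hmono : StrictMonoOn H (Icc a x) :=
    strictMonoOn_of_deriv_pos (convex_Icc a x) (hH.mono (Icc_subset_Icc_right hx.2))
      (by simpa only [interior_Icc] using hpos)
  have hanti : StrictAntiOn H (Icc x b) :=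
    strictAntiOn_of_deriv_neg (convex_Icc x b) (hH.mono (Icc_subset_Icc_left hx.1))
      (by simpa only [interior_Icc] using hneg)
  intro t ht hne
  rcases hne.lt_or_gt with h | h
  · exact hmono ⟨ht.1, h.le⟩ ⟨hx.1, le_rfl⟩ h
  · exact hanti ⟨le_rfl, hx.2⟩ ⟨h.le, ht.2⟩ h

lemma hasDerivAt_Gam {γ : ℝ → ℝ} (hγ : Continuous γ) (t : ℝ) : HasDerivAt (Gam γ) (γ t) t :=
  (intervalIntegral.integral_hasDerivAt_right (hγ.intervalIntegrable 0 t)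
    (hγ.stronglyMeasurableAtFilter _ _) hγ.continuousAt).const_add (-1)

lemma deriv_lt_zero_of_magneticCurvature_pos {γ : ℝ → ℝ} {m ε t : ℝ} (hγ : ContDiff ℝ 2 γ)
    (hm : 0 < m) (hε : 1 ≤ ε ^ 2) (hγt : 0 < γ t)
    (hK : 0 < m ^ 2 * (-(deriv (deriv γ) t) / γ t) + 1) (hzero : m * deriv γ t - ε * γ t = 0) :
    deriv (fun s => m * deriv γ s - ε * γ s) t < 0 := by
  have hderiv : HasDerivAt (fun s => m * deriv γ s - ε * γ s)
      (m * deriv (deriv γ) t - ε * deriv γ t) t :=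
    ((hγ.differentiable_deriv_two t).hasDerivAt.const_mul m).sub
      ((hγ.differentiable two_ne_zero t).hasDerivAt.const_mul ε)
  have hK' : m ^ 2 * deriv (deriv γ) t < γ t := by
    have hK_eq : m ^ 2 * (-(deriv (deriv γ) t) / γ t) + 1
        = (γ t - m ^ 2 * deriv (deriv γ) t) / γ t := by
      field_simp
      ring
    rw [hK_eq] at hK
    exact sub_pos.1 ((div_pos_iff_of_pos_right hγt).1 hK)
  have hmul : m * (m * deriv (deriv γ) t - ε * deriv γ t)
      = m ^ 2 * deriv (deriv γ) t - ε ^ 2 * γ t := by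
    linear_combination (-ε) * hzero
  have hγε : γ t ≤ ε ^ 2 * γ t := le_mul_of_one_le_left hγt.le hε
  rw [hderiv.deriv]
  exact neg_of_mul_neg_right (by linarith) hm.le

lemma IsProfileFunction.existsUnique_zero_and_strictMax {ℓ m ε : ℝ} {γ : ℝ → ℝ}
    (hγ : IsProfileFunction ℓ γ) (hm : 0 < m) (hε : 1 ≤ ε ^ 2)
    (hK : ∀ t ∈ Ioo 0 ℓ, 0 < m ^ 2 * (-(deriv (deriv γ) t) / γ t) + 1) :
    (∃! t, t ∈ Ioo 0 ℓ ∧ m * deriv γ t = ε * γ t) ∧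
      ∀ tp ∈ Ioo 0 ℓ, m * deriv γ tp = ε * γ tp → ∀ t ∈ Icc 0 ℓ, t ≠ tp →
        m * γ t - ε * Gam γ t < m * γ tp - ε * Gam γ tp := by
  have hγ2 : ContDiff ℝ 2 γ := hγ.smooth.of_le (by norm_cast)
  set G : ℝ → ℝ := fun t => m * deriv γ t - ε * γ t
  have hG : Continuous G := (continuous_const.mul (hγ2.continuous_deriv one_le_two)).sub
    (continuous_const.mul hγ2.continuous)
  obtain ⟨t₀, ht₀, hpos, hzero, hneg⟩ := exists_zero_of_deriv_neg_at_zeros hG.continuousOn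
    (fun t ht => deriv_lt_zero_of_magneticCurvature_pos hγ2 hm hε (hγ.pos t ht) (hK t ht))
    hγ.ell_pos.le (by simp [G, hγ.deriv_left, hγ.zero_left, hm])
    (by simp [G, hγ.deriv_right, hγ.zero_right, hm])
  have hunique : ∀ t ∈ Ioo 0 ℓ, m * deriv γ t = ε * γ t → t = t₀ := by
    intro t ht hGt
    rcases lt_trichotomy t t₀ with h | h | h
    · exact absurd (sub_eq_zero.2 hGt) (hpos t ⟨ht.1.le, h⟩).ne'
    · exact h
    · exact absurd (sub_eq_zero.2 hGt) (hneg t ⟨h, ht.2.le⟩).ne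
  have hH : ∀ t, HasDerivAt (fun s => m * γ s - ε * Gam γ s) (G t) t := fun t =>
    ((hγ2.differentiable two_ne_zero t).hasDerivAt.const_mul m).sub
      ((hasDerivAt_Gam hγ2.continuous t).const_mul ε)
  have hmax := apply_lt_of_deriv_pos_of_deriv_neg
    (continuous_iff_continuousAt.2 fun t => (hH t).continuousAt).continuousOn
    (Ioo_subset_Icc_self ht₀) (fun t ht => (hH t).deriv ▸ hpos t ⟨ht.1.le, ht.2⟩)
    (fun t ht => (hH t).deriv ▸ hneg t ⟨ht.1, ht.2.le⟩)
  refine ⟨⟨t₀, ⟨ht₀, sub_eq_zero.1 hzero⟩, fun t ht => hunique t ht.1 ht.2⟩, ?_⟩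
  intro tp htp hztp
  exact hunique tp htp hztp ▸ hmax

/-- For a profile function with positive magnetic curvature
`m² (−γ''/γ) + 1 > 0` on `(0,ℓ)`: (a) there is exactly one `t⁺ ∈ (0,ℓ)` with
`m γ' t⁺ = γ t⁺`, and `Î⁺(t) = m γ t − Γ t` attains its maximum over `[0,ℓ]`
exactly at `t⁺`; (b) there is exactly one `t⁻ ∈ (0,ℓ)` with `−m γ' t⁻ = γ t⁻`,
and `Î⁻(t) = −m γ t − Γ t` attains its minimum over `[0,ℓ]` exactly at `t⁻`. -/
theorem stmt_7 (ℓ m : ℝ) (γ : ℝ → ℝ) (hγ : IsProfileFunction ℓ γ) (hm : 0 < m)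
    (hK : ∀ t ∈ Set.Ioo 0 ℓ, 0 < m ^ 2 * (-(deriv (deriv γ) t) / γ t) + 1) :
    ((∃! t : ℝ, t ∈ Set.Ioo 0 ℓ ∧ m * deriv γ t = γ t) ∧
      (∀ tp ∈ Set.Ioo 0 ℓ, m * deriv γ tp = γ tp →
        ∀ t ∈ Set.Icc 0 ℓ, t ≠ tp →
          m * γ t - Gam γ t < m * γ tp - Gam γ tp)) ∧
    ((∃! t : ℝ, t ∈ Set.Ioo 0 ℓ ∧ -(m * deriv γ t) = γ t) ∧
      (∀ tm ∈ Set.Ioo 0 ℓ, -(m * deriv γ tm) = γ tm →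
        ∀ t ∈ Set.Icc 0 ℓ, t ≠ tm →
          -(m * γ tm) - Gam γ tm < -(m * γ t) - Gam γ t)) := by
  have hplus := hγ.existsUnique_zero_and_strictMax hm (ε := 1) (by norm_num) hK
  have hminus := hγ.existsUnique_zero_and_strictMax hm (ε := -1) (by norm_num) hK
  simp only [one_mul, neg_one_mul, sub_neg_eq_add] at hplus hminus
  refine ⟨hplus, ?_, ?_⟩
  · simpa only [neg_eq_iff_eq_neg] using hminus.1
  · intro tm htm hzero t ht hne
    linarith [hminus.2 tm htm (by linarith) t ht hne]
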